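/- arXiv:2210.15171 — 4 statements merged into one kernel-verified Lean document; each statement's English description precedes it below -/
import Mathlib

section
/- Let A be an mth-order n-dimensional Z-tensor (real tensor with nonpositive off-diagonal entries) and b a nonnegative vector in R^n. If the set S_g = {x ≥ 0 : A x^{m-1} ≥ b} is nonempty, then S_g has a minimal element x*, and x* satisfies A x*^{m-1} = b; moreover x* ≤ y for every nonnegative solution y of A y^{m-1} = b. -/
open Finset Filter

noncomputable section

/-- Action of an order-(p+1) tensor (p trailing indices):
`(A x^{p})_i = ∑ a_{i i₂ … i_{p+1}} x_{i₂} ⋯ x_{i_{p+1}}`. -/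
def tapp (p n : ℕ) (A : Fin n → (Fin p → Fin n) → ℝ) (x : Fin n → ℝ) : Fin n → ℝ :=
  fun i => ∑ js : Fin p → Fin n, A i js * ∏ j, x (js j)

/-- A `Z`-tensor: all off-diagonal entries are nonpositive. -/
def IsZTensor (p n : ℕ) (A : Fin n → (Fin p → Fin n) → ℝ) : Prop :=
  ∀ i js, (∃ j, js j ≠ i) → A i js ≤ 0

/-- The identity tensor. -/
def identT (p n : ℕ) : Fin n → (Fin p → Fin n) → ℝ :=
  fun i js => if ∀ j, js j = i then 1 else 0

/-- Spectral radius of a tensor: sup of moduli of (real) eigenvalues. -/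
def tensorSpecRad (p n : ℕ) (B : Fin n → (Fin p → Fin n) → ℝ) : ℝ :=
  sSup {r : ℝ | ∃ lam : ℝ, ∃ x : Fin n → ℝ, x ≠ 0 ∧
    (∀ i, tapp p n B x i = lam * x i ^ p) ∧ r = |lam|}

/-- A nonsingular M-tensor: `A = s I − B` with `B ≥ 0` and `s > ρ(B)`. -/
def IsMTensor (p n : ℕ) (A : Fin n → (Fin p → Fin n) → ℝ) : Prop :=
  ∃ s : ℝ, ∃ B : Fin n → (Fin p → Fin n) → ℝ,
    (∀ i js, 0 ≤ B i js) ∧ tensorSpecRad p n B < s ∧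
    ∀ i js, A i js = s * identT p n i js - B i js

/-- The diagonal-part tensor of `A`. -/
def diagT (p n : ℕ) (A : Fin n → (Fin p → Fin n) → ℝ) : Fin n → (Fin p → Fin n) → ℝ :=
  fun i js => if ∀ j, js j = i then A i (fun _ => i) else 0

/-- The majorization matrix of `A`: `M_{ij} = a_{i j … j}`. -/
def majMatrix (p n : ℕ) (A : Fin n → (Fin p → Fin n) → ℝ) : Matrix (Fin n) (Fin n) ℝ :=
  fun i j => A i (fun _ => j)

/-- The "mixed index" part `N = M_tensor − A`: zero on constant trailing tuples,
`−A` elsewhere. -/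
def NPart (p n : ℕ) (A : Fin n → (Fin p → Fin n) → ℝ) : Fin n → (Fin p → Fin n) → ℝ :=
  fun i js => if ∀ j' j'', js j' = js j'' then 0 else -A i js

/-- A nonsingular M-matrix: a Z-matrix with `M y > 0` for some `y > 0`. -/
def IsMMatrix (n : ℕ) (P : Matrix (Fin n) (Fin n) ℝ) : Prop :=
  (∀ i j, i ≠ j → P i j ≤ 0) ∧ ∃ y : Fin n → ℝ, (∀ i, 0 < y i) ∧ ∀ i, 0 < P.mulVec y i

/-- Spectral radius of a real matrix (via its complex spectrum). -/
def matSpecRad (n : ℕ) (J : Matrix (Fin n) (Fin n) ℝ) : ℝ :=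
  sSup {r : ℝ | ∃ μ ∈ spectrum ℂ (J.map (Complex.ofReal ·)), r = ‖μ‖}

/-- Irreducibility of a matrix. -/
def MatIrreducible (n : ℕ) (J : Matrix (Fin n) (Fin n) ℝ) : Prop :=
  ∀ S : Finset (Fin n), S.Nonempty → S ≠ Finset.univ → ∃ i ∈ S, ∃ j, j ∉ S ∧ J i j ≠ 0

open Topology

/-- A minimiser of `∑ i, x i` over the compact part of `S` below one of its points is least,
since taking `⊓` with any other point of `S` cannot lower the sum. -/
lemma exists_isLeast_of_infClosed {ι : Type*} [Fintype ι] {S : Set (ι → ℝ)}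
    (hne : S.Nonempty) (hclosed : IsClosed S) (hbdd : BddBelow S) (hinf : InfClosed S) :
    ∃ x, IsLeast S x := by
  obtain ⟨x₀, hx₀⟩ := hne
  obtain ⟨l, hl⟩ := hbdd
  have hK : IsCompact (S ∩ Set.Icc l x₀) := isCompact_Icc.inter_left hclosed
  obtain ⟨x, ⟨hxS, -, hxx₀⟩, hxmin⟩ := hK.exists_isMinOn ⟨x₀, hx₀, hl hx₀, le_rfl⟩
    (continuous_finsetSum _ fun i _ => continuous_apply i).continuousOn
  refine ⟨x, hxS, fun y hy => ?_⟩
  have hle : x ⊓ y ≤ x := inf_le_left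
  have hsum : ∑ i, x i ≤ ∑ i, (x ⊓ y) i :=
    hxmin ⟨hinf hxS hy, hl (hinf hxS hy), hle.trans hxx₀⟩
  have heq : x ⊓ y = x := funext fun i =>
    (Finset.sum_eq_sum_iff_of_le fun i _ => hle i).1
      (le_antisymm (Finset.sum_le_sum fun i _ => hle i) hsum) i (Finset.mem_univ i)
  exact inf_eq_left.1 heq

lemma continuous_tapp (p n : ℕ) (A : Fin n → (Fin p → Fin n) → ℝ) : Continuous (tapp p n A) :=
  continuous_pi fun _ => continuous_finsetSum _ fun _ _ =>
    continuous_const.mul (continuous_finsetProd _ fun _ _ => continuous_apply _)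

section ZTensor

variable {p n : ℕ} {A : Fin n → (Fin p → Fin n) → ℝ}

lemma IsZTensor.tapp_le_tapp_of_le (hA : IsZTensor p n A) {x z : Fin n → ℝ} (hz : 0 ≤ z)
    (hzx : z ≤ x) {i : Fin n} (hi : z i = x i) : tapp p n A x i ≤ tapp p n A z i := by
  refine Finset.sum_le_sum fun js _ => ?_
  by_cases hdiag : ∀ j, js j = i
  · simp only [hdiag, hi, le_refl]
  · push Not at hdiag
    exact mul_le_mul_of_nonpos_left
      (Finset.prod_le_prod (fun j _ => hz _) fun j _ => hzx _) (hA i js hdiag)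

lemma IsZTensor.tapp_nonpos_of_eq_zero (hp : 0 < p) (hA : IsZTensor p n A) {x : Fin n → ℝ}
    (hx : 0 ≤ x) {i : Fin n} (hxi : x i = 0) : tapp p n A x i ≤ 0 := by
  refine Finset.sum_nonpos fun js _ => ?_
  by_cases hdiag : ∀ j, js j = i
  · have : ∏ j, x (js j) = 0 :=
      Finset.prod_eq_zero (Finset.mem_univ ⟨0, hp⟩) (by rw [hdiag, hxi])
    rw [this, mul_zero]
  · push Not at hdiag
    exact mul_nonpos_of_nonpos_of_nonneg (hA i js hdiag) (Finset.prod_nonneg fun j _ => hx _)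

def superSolutions (p n : ℕ) (A : Fin n → (Fin p → Fin n) → ℝ) (b : Fin n → ℝ) :
    Set (Fin n → ℝ) :=
  {x | 0 ≤ x ∧ b ≤ tapp p n A x}

lemma isClosed_superSolutions (b : Fin n → ℝ) : IsClosed (superSolutions p n A b) :=
  (isClosed_le continuous_const continuous_id).inter
    (isClosed_le continuous_const (continuous_tapp p n A))

lemma IsZTensor.infClosed_superSolutions (hA : IsZTensor p n A) (b : Fin n → ℝ) :
    InfClosed (superSolutions p n A b) := by
  rintro x ⟨hx, hxb⟩ y ⟨hy, hyb⟩
  refine ⟨le_inf hx hy, fun i => ?_⟩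
  rcases le_total (x i) (y i) with hxy | hyx
  · exact (hxb i).trans (hA.tapp_le_tapp_of_le (le_inf hx hy) inf_le_left (inf_of_le_left hxy))
  · exact (hyb i).trans (hA.tapp_le_tapp_of_le (le_inf hx hy) inf_le_right (inf_of_le_right hyx))

/-- If `(A x)_i > b_i` at a least element `x`, then either `x_i = 0`, where
`(A x)_i ≤ 0 ≤ b_i`, or lowering `x_i` slightly keeps `x` a supersolution by continuity in
row `i` and by the `Z`-sign pattern in the other rows, contradicting leastness. -/
lemma IsZTensor.tapp_eq_of_isLeast (hp : 0 < p) (hA : IsZTensor p n A) {b : Fin n → ℝ}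
    (hb : 0 ≤ b) {x : Fin n → ℝ} (hx : IsLeast (superSolutions p n A b) x) :
    tapp p n A x = b := by
  obtain ⟨⟨hx0, hxb⟩, hleast⟩ := hx
  funext i
  refine le_antisymm ?_ (hxb i)
  by_contra! hlt
  rcases (hx0 i : (0 : ℝ) ≤ x i).eq_or_lt with hxi | hxi
  · have hbi : (0 : ℝ) ≤ b i := hb i
    linarith [hA.tapp_nonpos_of_eq_zero hp hx0 hxi.symm]
  have hcont : Continuous fun t => tapp p n A (Function.update x i t) i :=
    (continuous_apply i).comp
      ((continuous_tapp p n A).comp (continuous_const.update i continuous_id))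
  have hev : ∀ᶠ t in 𝓝[<] x i, b i < tapp p n A (Function.update x i t) i ∧ 0 < t :=
    (Filter.Tendsto.eventually_const_lt (by simpa using hlt)
      (hcont.continuousAt.tendsto.mono_left nhdsWithin_le_nhds)).and
      (eventually_nhdsWithin_of_eventually_nhds (eventually_gt_nhds hxi))
  obtain ⟨t, ⟨hbt, ht0⟩, htx⟩ := (hev.and self_mem_nhdsWithin).exists
  set y := Function.update x i t
  have hyx : y ≤ x := update_le_self_iff.2 htx.le
  have hy0 : 0 ≤ y := le_update_iff.2 ⟨ht0.le, fun j _ => hx0 j⟩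
  have hyS : y ∈ superSolutions p n A b := by
    refine ⟨hy0, fun j => ?_⟩
    rcases eq_or_ne j i with rfl | hji
    · exact hbt.le
    · exact (hxb j).trans (hA.tapp_le_tapp_of_le hy0 hyx (Function.update_of_ne hji _ _))
  exact ((hleast hyS i).trans_eq (Function.update_self i t x)).not_gt htx

end ZTensor

/-- For a Z-tensor `A` and `b ≥ 0`, if `S_g = {x ≥ 0 : A x^{m-1} ≥ b}` is
nonempty then it has a minimal element, which is the minimal nonnegative solution of
`A x^{m-1} = b`. -/
theorem stmt0 (m n : ℕ) (hm : 2 ≤ m) (A : Fin n → (Fin (m-1) → Fin n) → ℝ)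
    (hA : IsZTensor (m-1) n A) (b : Fin n → ℝ) (hb : 0 ≤ b)
    (hne : ∃ x : Fin n → ℝ, 0 ≤ x ∧ b ≤ tapp (m-1) n A x) :
    ∃ xs : Fin n → ℝ, (0 ≤ xs ∧ b ≤ tapp (m-1) n A xs) ∧
      (∀ y : Fin n → ℝ, 0 ≤ y → b ≤ tapp (m-1) n A y → xs ≤ y) ∧
      tapp (m-1) n A xs = b ∧
      (∀ y : Fin n → ℝ, 0 ≤ y → tapp (m-1) n A y = b → xs ≤ y) := by
  obtain ⟨xs, hxs⟩ := exists_isLeast_of_infClosed hne (isClosed_superSolutions b)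
    ⟨0, fun _ hx => hx.1⟩ (hA.infClosed_superSolutions b)
  refine ⟨xs, hxs.1, fun y hy hyb => hxs.2 ⟨hy, hyb⟩, hA.tapp_eq_of_isLeast (by omega) hb hxs,
    fun y hy hyb => hxs.2 ⟨hy, hyb.ge⟩⟩

end
end

section
/- Let A be an mth-order n-dimensional Z-tensor with positive diagonal entries, written A = D − B with D the diagonal part and B ≥ 0, and let b ≥ 0. Define the Jacobi iteration x_{k+1} = (D^{-1}(B x_k^{m-1} + b))^{[1/(m-1)]} with x_0 = 0 (equivalently D x_{k+1}^{m-1} = B x_k^{m-1} + b). Then the sequence (x_k) is componentwise monotonically increasing, and x_k ≤ x for every x ≥ 0 with A x^{m-1} ≥ b. -/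
/-!
For a Z-tensor the splitting part `B = D − A` is entrywise nonnegative, so `x ↦ B x^{m-1}` is
monotone on the nonnegative orthant, and `t ↦ d t^{m-1}` is strictly increasing on `[0, ∞)` for
`d > 0`. Hence a Jacobi step preserves order: from `x_k ≤ w` and `B w^{m-1} + b ≤ D v^{m-1}` one
gets `x_{k+1} ≤ v`. Monotonicity is the case `w = x_{k+1}`, `v = x_{k+2}`; the bound is the case
`w = v = z`, since `A z^{m-1} ≥ b` says exactly `B z^{m-1} + b ≤ D z^{m-1}`. Both follow by
induction from `x_0 = 0`.
-/

open Finset Filter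

noncomputable section

/-- The splitting `A = D − B` of the paper: `B = D − A`. -/
def offDiagPart (p n : ℕ) (A : Fin n → (Fin p → Fin n) → ℝ) : Fin n → (Fin p → Fin n) → ℝ :=
  fun i js => diagT p n A i js - A i js

lemma tapp_le_tapp_of_nonneg {p n : ℕ} {B : Fin n → (Fin p → Fin n) → ℝ}
    (hB : ∀ i js, 0 ≤ B i js) {x y : Fin n → ℝ} (hx : 0 ≤ x) (hxy : x ≤ y) (i : Fin n) :
    tapp p n B x i ≤ tapp p n B y i :=
  Finset.sum_le_sum fun js _ => mul_le_mul_of_nonneg_left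
    (Finset.prod_le_prod (fun _ _ => hx _) fun _ _ => hxy _) (hB i js)

lemma tapp_diagT (p n : ℕ) (A : Fin n → (Fin p → Fin n) → ℝ) (x : Fin n → ℝ) (i : Fin n) :
    tapp p n (diagT p n A) x i = A i (fun _ => i) * x i ^ p := by
  unfold tapp diagT
  rw [Finset.sum_eq_single (fun _ => i)]
  · simp
  · intro js _ hjs
    have : ¬ ∀ j, js j = i := fun h => hjs (funext h)
    simp [this]
  · simp

lemma tapp_offDiagPart (p n : ℕ) (A : Fin n → (Fin p → Fin n) → ℝ) (x : Fin n → ℝ)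
    (i : Fin n) :
    tapp p n (offDiagPart p n A) x i = A i (fun _ => i) * x i ^ p - tapp p n A x i := by
  rw [← tapp_diagT]
  simp only [tapp, offDiagPart, sub_mul, Finset.sum_sub_distrib]

lemma offDiagPart_nonneg {p n : ℕ} {A : Fin n → (Fin p → Fin n) → ℝ}
    (hA : IsZTensor p n A) (i : Fin n) (js : Fin p → Fin n) : 0 ≤ offDiagPart p n A i js := by
  by_cases h : ∀ j, js j = i
  · simp [offDiagPart, diagT, funext h]
  · have hA' := hA i js (not_forall.mp h)
    simp only [offDiagPart, diagT, if_neg h]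
    linarith

lemma le_of_jacobi_step {p n : ℕ} (hp : p ≠ 0) {A : Fin n → (Fin p → Fin n) → ℝ}
    (hA : IsZTensor p n A) (hdiag : ∀ i, 0 < A i (fun _ => i)) {b u v w y : Fin n → ℝ}
    (hu : 0 ≤ u) (hv : 0 ≤ v) (hy : 0 ≤ y) (hyw : y ≤ w)
    (hu_eq : ∀ i, A i (fun _ => i) * u i ^ p = tapp p n (offDiagPart p n A) y i + b i)
    (hv_ge : ∀ i, tapp p n (offDiagPart p n A) w i + b i ≤ A i (fun _ => i) * v i ^ p) :
    u ≤ v := by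
  intro i
  have hpow : A i (fun _ => i) * u i ^ p ≤ A i (fun _ => i) * v i ^ p := by
    rw [hu_eq i]
    linarith [hv_ge i, tapp_le_tapp_of_nonneg (offDiagPart_nonneg hA) hy hyw i]
  exact (pow_le_pow_iff_left₀ (hu i) (hv i) hp).mp ((mul_le_mul_iff_right₀ (hdiag i)).mp hpow)

theorem stmt1_general (m n : ℕ) (hm : 2 ≤ m) (A : Fin n → (Fin (m-1) → Fin n) → ℝ)
    (hA : IsZTensor (m-1) n A) (hdiag : ∀ i, 0 < A i (fun _ => i))
    (b : Fin n → ℝ)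
    (x : ℕ → Fin n → ℝ) (hx0 : x 0 = 0)
    (hxpos : ∀ k, 0 ≤ x (k+1))
    (hiter : ∀ k i, A i (fun _ => i) * (x (k+1) i) ^ (m-1) =
      tapp (m-1) n (fun i js => diagT (m-1) n A i js - A i js) (x k) i + b i) :
    (∀ k, x k ≤ x (k+1)) ∧
    ∀ z : Fin n → ℝ, 0 ≤ z → b ≤ tapp (m-1) n A z → ∀ k, x k ≤ z := by
  have hp : m - 1 ≠ 0 := by omega
  have hxnn : ∀ k, 0 ≤ x k := by
    rintro (_ | k)
    · exact hx0.ge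
    · exact hxpos k
  refine ⟨fun k => ?_, fun z hz hzb k => ?_⟩
  · induction k with
    | zero => exact hx0 ▸ hxpos 0
    | succ k ih =>
      exact le_of_jacobi_step hp hA hdiag (hxpos k) (hxpos (k+1)) (hxnn k) ih (hiter k)
        fun i => (hiter (k+1) i).ge
  · induction k with
    | zero => exact hx0 ▸ hz
    | succ k ih =>
      refine le_of_jacobi_step hp hA hdiag (hxpos k) hz (hxnn k) ih (hiter k) fun i => ?_
      rw [tapp_offDiagPart]
      linarith [hzb i]

/-- the Jacobi iteration `D x_{k+1}^{m-1} = B x_k^{m-1} + b`, `x₀ = 0`,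
for a Z-tensor `A = D − B` with positive diagonal and `b ≥ 0`, is monotonically
increasing and bounded above by every `x ≥ 0` with `A x^{m-1} ≥ b`. -/
theorem stmt1 (m n : ℕ) (hm : 2 ≤ m) (A : Fin n → (Fin (m-1) → Fin n) → ℝ)
    (hA : IsZTensor (m-1) n A) (hdiag : ∀ i, 0 < A i (fun _ => i))
    (b : Fin n → ℝ) (hb : 0 ≤ b)
    (x : ℕ → Fin n → ℝ) (hx0 : x 0 = 0)
    (hxpos : ∀ k, 0 ≤ x (k+1))
    (hiter : ∀ k i, A i (fun _ => i) * (x (k+1) i) ^ (m-1) =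
      tapp (m-1) n (fun i js => diagT (m-1) n A i js - A i js) (x k) i + b i) :
    (∀ k, x k ≤ x (k+1)) ∧
    ∀ z : Fin n → ℝ, 0 ≤ z → b ≤ tapp (m-1) n A z → ∀ k, x k ≤ z :=
  stmt1_general m n hm A hA hdiag b x hx0 hxpos hiter
end
end

section
/- Let A be a Z-tensor and b ≥ 0 with S_g = {x ≥ 0 : A x^{m-1} ≥ b} nonempty, and let x_min(A,b) be the minimal nonnegative solution of A x^{m-1} = b. Suppose Ã is a Z-tensor with Ã ≥ A entrywise (diagonal entries increased and/or off-diagonal entries increased but remaining nonpositive) and 0 ≤ b̃ ≤ b. Then the equation Ã x^{m-1} = b̃ also has a minimal nonnegative solution x_min(Ã,b̃), and x_min(Ã,b̃) ≤ x_min(A,b). -/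
open Finset Filter

noncomputable section

/-!
For a Z-tensor `A`, `(A x^p)_i` can only grow when the other coordinates of `x ≥ 0` decrease, so
the nonnegative supersolutions `{x ≥ 0 : A x^p ≥ b}` are closed under componentwise `min`. Hence a
minimizer of `∑ i, x i` over the compact set of supersolutions below a given one is the least
supersolution, and for `b ≥ 0` it is an exact solution, so it is the minimal solution. Since
`Ã x^p ≥ A x^p = b ≥ b̃` at `x = x_min(A, b)`, that vector is a supersolution for `(Ã, b̃)`, which
therefore has a minimal solution below it.
-/

section

variable {p n : ℕ}

lemma tapp_le_tapp_of_le {A B : Fin n → (Fin p → Fin n) → ℝ} (hAB : ∀ i js, A i js ≤ B i js)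
    {x : Fin n → ℝ} (hx : 0 ≤ x) : tapp p n A x ≤ tapp p n B x := fun i =>
  Finset.sum_le_sum fun js _ =>
    mul_le_mul_of_nonneg_right (hAB i js) (Finset.prod_nonneg fun j _ => hx (js j))

lemma tapp_zero (hp : 0 < p) (A : Fin n → (Fin p → Fin n) → ℝ) : tapp p n A 0 = 0 := by
  funext i
  refine Finset.sum_eq_zero fun js _ => ?_
  rw [Finset.prod_eq_zero (Finset.mem_univ ⟨0, hp⟩) rfl, mul_zero]

lemma continuous_tapp_apply (A : Fin n → (Fin p → Fin n) → ℝ) (i : Fin n) :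
    Continuous fun x => tapp p n A x i :=
  continuous_finsetSum _ fun _ _ =>
    continuous_const.mul (continuous_finsetProd _ fun _ _ => continuous_apply _)

lemma IsZTensor.tapp_apply_le_of_le_of_eq {A : Fin n → (Fin p → Fin n) → ℝ}
    (hA : IsZTensor p n A) {u v : Fin n → ℝ} (hu : 0 ≤ u) (huv : u ≤ v) {i : Fin n}
    (hi : u i = v i) : tapp p n A v i ≤ tapp p n A u i := by
  refine Finset.sum_le_sum fun js _ => ?_
  by_cases hdiag : ∀ j, js j = i
  · simp only [hdiag, hi, le_refl]
  · exact mul_le_mul_of_nonpos_left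
      (Finset.prod_le_prod (fun j _ => hu (js j)) (fun j _ => huv (js j)))
      (hA i js (not_forall.mp hdiag))

def supersolutions (p n : ℕ) (A : Fin n → (Fin p → Fin n) → ℝ) (b : Fin n → ℝ) :
    Set (Fin n → ℝ) :=
  {x | 0 ≤ x ∧ b ≤ tapp p n A x}

lemma isClosed_supersolutions (A : Fin n → (Fin p → Fin n) → ℝ) (b : Fin n → ℝ) :
    IsClosed (supersolutions p n A b) :=
  (isClosed_le continuous_const continuous_id).inter <|
    isClosed_le continuous_const (continuous_pi (continuous_tapp_apply A))

variable {A : Fin n → (Fin p → Fin n) → ℝ} {b : Fin n → ℝ}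

lemma IsZTensor.inf_mem_supersolutions (hA : IsZTensor p n A) {x y : Fin n → ℝ}
    (hx : x ∈ supersolutions p n A b) (hy : y ∈ supersolutions p n A b) :
    x ⊓ y ∈ supersolutions p n A b := by
  refine ⟨le_inf hx.1 hy.1, fun i => ?_⟩
  have hxy0 : 0 ≤ x ⊓ y := le_inf hx.1 hy.1
  rcases le_total (x i) (y i) with hle | hle
  · exact (hx.2 i).trans <| hA.tapp_apply_le_of_le_of_eq hxy0 inf_le_left (inf_of_le_left hle)
  · exact (hy.2 i).trans <| hA.tapp_apply_le_of_le_of_eq hxy0 inf_le_right (inf_of_le_right hle)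

lemma IsZTensor.exists_isLeast_supersolutions (hA : IsZTensor p n A)
    (hne : (supersolutions p n A b).Nonempty) :
    ∃ z, IsLeast (supersolutions p n A b) z := by
  obtain ⟨x₀, hx₀⟩ := hne
  have hcompact : IsCompact (supersolutions p n A b ∩ Set.Icc 0 x₀) :=
    isCompact_Icc.inter_left (isClosed_supersolutions A b)
  obtain ⟨z, ⟨hz, -, hzx₀⟩, hzmin⟩ := hcompact.exists_isMinOn ⟨x₀, hx₀, hx₀.1, le_rfl⟩
    (continuous_finsetSum _ fun i _ => continuous_apply i).continuousOn
  refine ⟨z, hz, fun x hx => ?_⟩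
  have hzx : z ⊓ x ∈ supersolutions p n A b ∩ Set.Icc 0 x₀ :=
    ⟨hA.inf_mem_supersolutions hz hx, (hA.inf_mem_supersolutions hz hx).1,
      inf_le_left.trans hzx₀⟩
  have hnot_lt : ¬ z ⊓ x < z := fun hlt =>
    (Fintype.sum_strictMono hlt).not_ge (isMinOn_iff.mp hzmin _ hzx)
  exact inf_eq_left.mp (eq_of_le_of_not_lt inf_le_left hnot_lt)

/-- If `(A z^p)_i > b_i` at the least supersolution, lowering `z i` slightly (possible when
`z i > 0` by continuity) gives a smaller supersolution; when `z i = 0`, `(A z^p)_i ≤ (A 0^p)_i = 0`. -/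
lemma IsZTensor.tapp_eq_of_isLeast_supersolutions (hA : IsZTensor p n A) (hp : 0 < p)
    (hb : 0 ≤ b) {z : Fin n → ℝ} (hz : IsLeast (supersolutions p n A b) z) :
    tapp p n A z = b := by
  obtain ⟨⟨hz0, hzb⟩, hleast⟩ := hz
  refine funext fun i => (hzb i).antisymm' (not_lt.mp fun hlt => ?_)
  rcases (hz0 i).eq_or_lt with hzi | hzi
  · have := hA.tapp_apply_le_of_le_of_eq le_rfl hz0 hzi
    rw [tapp_zero hp] at this
    exact (hlt.trans_le this).not_ge (hb i)
  · have hnear : ∀ᶠ t in nhdsWithin (z i) (Set.Iio (z i)),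
        b i < tapp p n A (Function.update z i t) i ∧ t ∈ Set.Ioo 0 (z i) := by
      refine Eventually.and (nhdsWithin_le_nhds ?_) (Ioo_mem_nhdsLT hzi)
      have hcont : Continuous fun t => tapp p n A (Function.update z i t) i :=
        (continuous_tapp_apply A i).comp (continuous_const.update i continuous_id)
      exact continuousAt_const.eventually_lt hcont.continuousAt (by simpa using hlt)
    obtain ⟨t, hbt, ht0, htz⟩ := hnear.exists
    have hupd_le : Function.update z i t ≤ z := update_le_self_iff.mpr htz.le
    have hupd0 : 0 ≤ Function.update z i t := le_update_iff.mpr ⟨ht0.le, fun j _ => hz0 j⟩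
    have hupd : Function.update z i t ∈ supersolutions p n A b := by
      refine ⟨hupd0, fun j => ?_⟩
      rcases eq_or_ne j i with rfl | hji
      · exact hbt.le
      · exact (hzb j).trans <| hA.tapp_apply_le_of_le_of_eq hupd0 hupd_le
          (Function.update_of_ne hji t z)
    have := hleast hupd i
    rw [Function.update_self] at this
    exact htz.not_ge this

lemma IsZTensor.isLeast_solutions (hA : IsZTensor p n A) (hp : 0 < p) (hb : 0 ≤ b)
    {z : Fin n → ℝ} (hz : IsLeast (supersolutions p n A b) z) :
    IsLeast {y | 0 ≤ y ∧ tapp p n A y = b} z :=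
  ⟨⟨hz.1.1, hA.tapp_eq_of_isLeast_supersolutions hp hb hz⟩,
    fun _ hy => hz.2 ⟨hy.1, hy.2.ge⟩⟩

end

theorem stmt4_general (m n : ℕ) (hm : 2 ≤ m)
    (A At : Fin n → (Fin (m-1) → Fin n) → ℝ)
    (hAt : IsZTensor (m-1) n At)
    (hAle : ∀ i js, A i js ≤ At i js)
    (b bt : Fin n → ℝ) (hbt : 0 ≤ bt) (hble : bt ≤ b)
    (xmin : Fin n → ℝ) (hxmin : 0 ≤ xmin ∧ tapp (m-1) n A xmin = b ∧
      ∀ y : Fin n → ℝ, 0 ≤ y → tapp (m-1) n A y = b → xmin ≤ y) :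
    ∃ xmt : Fin n → ℝ, 0 ≤ xmt ∧ tapp (m-1) n At xmt = bt ∧
      (∀ y : Fin n → ℝ, 0 ≤ y → tapp (m-1) n At y = bt → xmt ≤ y) ∧
      xmt ≤ xmin := by
  obtain ⟨hxmin0, hxmin_eq, -⟩ := hxmin
  have hxmin_super : xmin ∈ supersolutions (m-1) n At bt :=
    ⟨hxmin0, hble.trans (hxmin_eq ▸ tapp_le_tapp_of_le hAle hxmin0)⟩
  obtain ⟨z, hz⟩ := hAt.exists_isLeast_supersolutions ⟨xmin, hxmin_super⟩
  obtain ⟨⟨hz0, hz_eq⟩, hz_least⟩ := hAt.isLeast_solutions (by omega) hbt hz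
  exact ⟨z, hz0, hz_eq, fun y hy0 hy => hz_least ⟨hy0, hy⟩, hz.2 hxmin_super⟩

/-- monotone dependence of the minimal nonnegative solution on the data:
increasing (entrywise) the Z-tensor and decreasing `b` (keeping it nonnegative)
preserves existence of the minimal nonnegative solution and decreases it. -/
theorem stmt4 (m n : ℕ) (hm : 2 ≤ m)
    (A At : Fin n → (Fin (m-1) → Fin n) → ℝ)
    (hA : IsZTensor (m-1) n A) (hAt : IsZTensor (m-1) n At)
    (hAle : ∀ i js, A i js ≤ At i js)
    (b bt : Fin n → ℝ) (hb : 0 ≤ b) (hbt : 0 ≤ bt) (hble : bt ≤ b)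
    (hne : ∃ x : Fin n → ℝ, 0 ≤ x ∧ b ≤ tapp (m-1) n A x)
    (xmin : Fin n → ℝ) (hxmin : 0 ≤ xmin ∧ tapp (m-1) n A xmin = b ∧
      ∀ y : Fin n → ℝ, 0 ≤ y → tapp (m-1) n A y = b → xmin ≤ y) :
    ∃ xmt : Fin n → ℝ, 0 ≤ xmt ∧ tapp (m-1) n At xmt = bt ∧
      (∀ y : Fin n → ℝ, 0 ≤ y → tapp (m-1) n At y = bt → xmt ≤ y) ∧
      xmt ≤ xmin :=
  stmt4_general m n hm A At hAt hAle b bt hbt hble xmin hxmin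

end
end

section
/- Define A ∈ R^{[4,3]} by a_{1111} = 0, a_{2222} = a_{3333} = 1, a_{1112} = a_{3111} = −1, and all other entries zero, and let b = (0,0,1)^T. Then A is a Z-tensor, the nonnegative solutions of A x^3 = b are exactly the vectors (c, 0, (1+c^3)^{1/3}) for c ≥ 0, the minimal nonnegative solution is (0,0,1), and there is no maximal nonnegative solution. -/
/-! Entrywise, `A7 x³ = (-x₀² x₁, x₁³, x₂³ - x₀³)`, so `A7 x³ = (0, 0, 1)` means `x₁ = 0` and
`x₂³ = 1 + x₀³` with `x₀` free. Every nonnegative solution thus has `x₂ ≥ 1`, which makes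
`(0, 0, 1)` minimal, while `x₀` is unbounded on the solution set, so no solution dominates
all the others. -/

open Finset Filter

noncomputable section

/-- The tensor of the remark: `a_{1111}=0`, `a_{2222}=a_{3333}=1`,
`a_{1112}=a_{3111}=-1`, zero elsewhere (0-indexed). -/
def A7 : Fin 3 → (Fin 3 → Fin 3) → ℝ := fun i js =>
  if i = 1 ∧ ∀ j, js j = 1 then 1
  else if i = 2 ∧ ∀ j, js j = 2 then 1
  else if i = 0 ∧ js 0 = 0 ∧ js 1 = 0 ∧ js 2 = 1 then -1
  else if i = 2 ∧ ∀ j, js j = 0 then -1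
  else 0

lemma A7_zero (js : Fin 3 → Fin 3) : A7 0 js = if js = ![0, 0, 1] then -1 else 0 := by
  simp [A7, funext_iff, Fin.forall_fin_succ]

lemma A7_one (js : Fin 3 → Fin 3) : A7 1 js = if js = fun _ => 1 then 1 else 0 := by
  simp [A7, funext_iff]

lemma A7_two (js : Fin 3 → Fin 3) :
    A7 2 js = (if js = fun _ => 2 then 1 else 0) - (if js = fun _ => 0 then 1 else 0) := by
  simp only [A7, funext_iff]
  split_ifs <;> simp_all

lemma tapp_A7 (x : Fin 3 → ℝ) :
    tapp 3 3 A7 x = ![-(x 0 ^ 2 * x 1), x 1 ^ 3, x 2 ^ 3 - x 0 ^ 3] := by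
  funext i
  fin_cases i <;>
    simp [tapp, A7_zero, A7_one, A7_two, ite_mul, sub_mul, Finset.sum_sub_distrib,
      Fin.prod_univ_three, pow_succ]

lemma isZTensor_A7 : IsZTensor 3 3 A7 := by
  rintro i js ⟨j, hj⟩
  match i with
  | 0 =>
    rw [A7_zero]
    split_ifs <;> norm_num
  | 1 => rw [A7_one, if_neg fun h => hj (congrFun h j)]
  | 2 =>
    rw [A7_two, if_neg fun h => hj (congrFun h j)]
    split_ifs <;> norm_num

lemma tapp_A7_eq_iff (x : Fin 3 → ℝ) :
    tapp 3 3 A7 x = ![0, 0, 1] ↔ x 1 = 0 ∧ x 2 ^ 3 = 1 + x 0 ^ 3 := by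
  rw [tapp_A7]
  constructor
  · intro h
    have h1 : x 1 ^ 3 = 0 := congrFun h 1
    have h2 : x 2 ^ 3 - x 0 ^ 3 = 1 := congrFun h 2
    exact ⟨pow_eq_zero_iff three_ne_zero |>.1 h1, by linarith⟩
  · rintro ⟨h1, h2⟩
    ext i
    fin_cases i <;> simp [h1, h2]

lemma eq_rpow_one_div_three_iff {y z : ℝ} (hy : 0 ≤ y) (hz : 0 ≤ z) :
    z = y ^ ((1 : ℝ) / 3) ↔ z ^ 3 = y := by
  rw [one_div, Real.eq_rpow_inv hz hy three_ne_zero, Real.rpow_ofNat]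

lemma nonneg_solution_iff (x : Fin 3 → ℝ) (hx : 0 ≤ x) :
    tapp 3 3 A7 x = ![0, 0, 1] ↔
      ∃ c : ℝ, 0 ≤ c ∧ x = ![c, 0, (1 + c ^ 3) ^ ((1 : ℝ)/3)] := by
  rw [tapp_A7_eq_iff]
  constructor
  · rintro ⟨h1, h2⟩
    have hrhs : 0 ≤ 1 + x 0 ^ 3 := add_nonneg zero_le_one (pow_nonneg (hx 0) 3)
    refine ⟨x 0, hx 0, funext fun i => ?_⟩
    fin_cases i
    · rfl
    · exact h1
    · exact (eq_rpow_one_div_three_iff hrhs (hx 2)).2 h2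
  · rintro ⟨c, hc, rfl⟩
    have hr := (eq_rpow_one_div_three_iff (y := 1 + c ^ 3) (by positivity) (by positivity)).1 rfl
    simpa using hr

lemma le_of_nonneg_solution (y : Fin 3 → ℝ) (hy : 0 ≤ y) (h : tapp 3 3 A7 y = ![0, 0, 1]) :
    ![0, 0, 1] ≤ y := by
  obtain ⟨h1, h2⟩ := (tapp_A7_eq_iff y).1 h
  have hy2 : 1 ≤ y 2 :=
    le_of_pow_le_pow_left₀ three_ne_zero (hy 2) (by linarith [pow_nonneg (hy 0) 3])
  intro i
  fin_cases i
  · exact hy 0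
  · exact h1.ge
  · exact hy2

lemma exists_nonneg_solution_gt (t : ℝ) :
    ∃ y : Fin 3 → ℝ, 0 ≤ y ∧ tapp 3 3 A7 y = ![0, 0, 1] ∧ t < y 0 := by
  set c := max t 0 + 1
  have hc : 0 ≤ c := by positivity
  have hy : (0 : Fin 3 → ℝ) ≤ ![c, 0, (1 + c ^ 3) ^ ((1 : ℝ)/3)] := by
    intro i
    fin_cases i <;> simp [hc]
    positivity
  exact ⟨_, hy, (nonneg_solution_iff _ hy).2 ⟨c, hc, rfl⟩,
    (le_max_left t 0).trans_lt (lt_add_one _)⟩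

/-- `A7` is a Z-tensor; with `b = (0,0,1)` the nonnegative solutions of
`A x³ = b` are exactly `(c, 0, (1+c³)^{1/3})` for `c ≥ 0`; `(0,0,1)` is the minimal
nonnegative solution, and there is no maximal nonnegative solution. -/
theorem stmt7 :
    IsZTensor 3 3 A7 ∧
    (∀ x : Fin 3 → ℝ, 0 ≤ x →
      (tapp 3 3 A7 x = ![0, 0, 1] ↔
        ∃ c : ℝ, 0 ≤ c ∧ x = ![c, 0, (1 + c ^ 3) ^ ((1 : ℝ)/3)])) ∧
    (0 ≤ (![0, 0, 1] : Fin 3 → ℝ) ∧ tapp 3 3 A7 ![0, 0, 1] = ![0, 0, 1] ∧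
      ∀ y : Fin 3 → ℝ, 0 ≤ y → tapp 3 3 A7 y = ![0, 0, 1] →
        (![0, 0, 1] : Fin 3 → ℝ) ≤ y) ∧
    ¬ ∃ xM : Fin 3 → ℝ, 0 ≤ xM ∧ tapp 3 3 A7 xM = ![0, 0, 1] ∧
      ∀ y : Fin 3 → ℝ, 0 ≤ y → tapp 3 3 A7 y = ![0, 0, 1] → y ≤ xM := by
  have hb : (0 : Fin 3 → ℝ) ≤ ![0, 0, 1] := by
    intro i
    fin_cases i <;> simp
  refine ⟨isZTensor_A7, nonneg_solution_iff, ⟨hb, ?_, le_of_nonneg_solution⟩, ?_⟩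
  · simp [tapp_A7_eq_iff]
  · rintro ⟨xM, -, -, hmax⟩
    obtain ⟨y, hy, hsol, hlt⟩ := exists_nonneg_solution_gt (xM 0)
    exact (hmax y hy hsol 0).not_gt hlt

end
end
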